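/- arXiv:2001.04679 — 3 statements merged into one kernel-verified Lean document; each statement's English description precedes it below -/
import Mathlib

section
/- Let m, n ≥ 1 and 0 ≤ k ≤ m. The map ψ_k : Q_k(m,n) → P_k, (ν̄;μ) ↦ (μ_1, …, μ_{m−k}, n − ν_k, …, n − ν_1; −ν′_n, −ν′_{n−1}, …, −ν′_1), is a bijection between Q_k(m,n) and P_k. -/
/-- A partition: a weakly decreasing sequence of nonnegative integers with finitely many
nonzero parts, given by its (0-based) sequence of parts, so `parts i` is `ν_{i+1}`. -/
structure PPartition where
  parts : ℕ → ℕ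
  antitone : Antitone parts
  eventually_zero : ∃ N, ∀ i, N ≤ i → parts i = 0

/-- The conjugate partition value `ν′_j = #{i ≥ 1 : ν_i ≥ j}`. -/
noncomputable def conjP (ν : PPartition) (j : ℕ) : ℕ :=
  Set.ncard {i : ℕ | j ≤ ν.parts i}

/-- The length `l(ν)`: the number of nonzero parts. -/
noncomputable def lenP (ν : PPartition) : ℕ := conjP ν 1

/-- Membership in the set `P_k` of special weights for `gl(p|q)`. -/
def InPk (p q k : ℕ) (α : Fin p → ℤ) (β : Fin q → ℤ) : Prop :=
  Antitone α ∧ Antitone β ∧ k ≤ p ∧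
    (∀ j : Fin q, (j : ℕ) = 0 → β j = -(k : ℤ)) ∧
    (∀ i : Fin p, (i : ℕ) + 1 + k = p → 0 ≤ α i) ∧
    (∀ i : Fin p, (i : ℕ) + k = p → α i ≤ 0)

/-- The composite partition `ν̄;μ` belongs to `Q_k(m,n)`: `l(μ) ≤ m − k` and `ν′_n = k`. -/
noncomputable def InQk (m n k : ℕ) (ν μ : PPartition) : Prop :=
  lenP μ ≤ m - k ∧ conjP ν n = k

/-- The even part of the tuple `ψ_k(ν̄;μ) = (μ_1, …, μ_{m−k}, n−ν_k, …, n−ν_1; …)`. -/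
def psiEven (m n k : ℕ) (ν μ : PPartition) : Fin m → ℤ := fun i =>
  if (i : ℕ) + k < m then (μ.parts (i : ℕ) : ℤ)
  else (n : ℤ) - (ν.parts (m - 1 - (i : ℕ)) : ℤ)

/-- The odd part of the tuple `ψ_k(ν̄;μ) = (…; −ν′_n, −ν′_{n−1}, …, −ν′_1)`. -/
noncomputable def psiOdd (n : ℕ) (ν : PPartition) : Fin n → ℤ := fun j =>
  -((conjP ν (n - (j : ℕ)) : ℤ))


/-!
Rows of `ν` of length at least `n` are exactly the first `ν′_n = k` ones, and they are recorded
directly (reversed and shifted by `n`) in the last `k` entries of the even part, while `μ` fills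
the first `m - k` entries. The remaining rows of `ν` are shorter than `n`, so they are determined
by the column lengths `ν′_1, …, ν′_n`, i.e. by the odd part. Conversely, given a special weight,
the short rows are recovered from the columns by `ν_i = max {t ≤ n : i < ν′_t}`; the sign
conditions defining `P_k` are exactly what makes the two halves of `ν` fit together.
-/

namespace PPartition

theorem ext {ν μ : PPartition} (h : ν.parts = μ.parts) : ν = μ := by
  cases ν; cases μ; simpa using h

theorem conjP_eq_of_forall_iff {ν : PPartition} {j c : ℕ}
    (h : ∀ i, j ≤ ν.parts i ↔ i < c) : conjP ν j = c := by
  rw [conjP, show {i | j ≤ ν.parts i} = Set.Iio c from Set.ext h, Set.ncard_Iio_nat]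

theorem le_parts_iff_lt_conjP (ν : PPartition) {j : ℕ} (hj : 1 ≤ j) (i : ℕ) :
    j ≤ ν.parts i ↔ i < conjP ν j := by
  have hex : ∃ i, ν.parts i < j := by
    obtain ⟨N, hN⟩ := ν.eventually_zero
    exact ⟨N, by rw [hN N le_rfl]; omega⟩
  have hiff (i : ℕ) : j ≤ ν.parts i ↔ i < Nat.find hex := by
    refine ⟨fun h => lt_of_not_ge fun hi => ?_, fun h => not_lt.1 (Nat.find_min hex h)⟩
    have := ν.antitone hi
    have := Nat.find_spec hex
    omega
  rw [conjP_eq_of_forall_iff hiff]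
  exact hiff i

theorem conjP_le_conjP (ν : PPartition) {a b : ℕ} (ha : 1 ≤ a) (hab : a ≤ b) :
    conjP ν b ≤ conjP ν a := by
  by_contra! h
  have hb := (ν.le_parts_iff_lt_conjP (ha.trans hab) _).2 h
  have := (ν.le_parts_iff_lt_conjP ha _).1 (hab.trans hb)
  omega

theorem lenP_le_iff (μ : PPartition) (l : ℕ) : lenP μ ≤ l ↔ ∀ i, l ≤ i → μ.parts i = 0 := by
  have h := μ.le_parts_iff_lt_conjP le_rfl
  rw [lenP]
  refine ⟨fun hl i hi => ?_, fun h0 => ?_⟩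
  · have := (h i).not.2 (by omega)
    omega
  · by_contra! hl
    have := (h l).2 hl
    have := h0 l le_rfl
    omega

theorem parts_le_of_conjP_le {ν₁ ν₂ : PPartition} {n i : ℕ}
    (hc : ∀ t, 1 ≤ t → t ≤ n → conjP ν₁ t ≤ conjP ν₂ t) (hi : ν₁.parts i ≤ n) :
    ν₁.parts i ≤ ν₂.parts i := by
  rcases Nat.eq_zero_or_pos (ν₁.parts i) with h | h
  · omega
  · have h₁ := (ν₁.le_parts_iff_lt_conjP h i).1 le_rfl
    exact (ν₂.le_parts_iff_lt_conjP h i).2 (h₁.trans_le (hc _ h hi))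

end PPartition

open PPartition

theorem le_findGreatest_lt_iff {c : ℕ → ℕ} {n t : ℕ} (hc : AntitoneOn c (Set.Icc 1 n))
    (ht : 1 ≤ t) (htn : t ≤ n) (i : ℕ) :
    t ≤ Nat.findGreatest (fun s => i < c s) n ↔ i < c t := by
  refine ⟨fun h => ?_, fun h => Nat.le_findGreatest htn h⟩
  have hspec := Nat.findGreatest_of_ne_zero rfl (by omega : Nat.findGreatest (i < c ·) n ≠ 0)
  exact hspec.trans_le (hc ⟨ht, htn⟩ ⟨by omega, Nat.findGreatest_le n⟩ h)

section Psi

variable {m n k : ℕ}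

theorem psiEven_of_lt (ν μ : PPartition) {i : Fin m} (hi : (i : ℕ) + k < m) :
    psiEven m n k ν μ i = μ.parts i := by
  simp [psiEven, hi]

theorem psiEven_of_le (ν μ : PPartition) {i : Fin m} (hi : m ≤ (i : ℕ) + k) :
    psiEven m n k ν μ i = n - ν.parts (m - 1 - i) := by
  simp [psiEven, not_lt.2 hi]

theorem InQk.le_parts_iff {ν μ : PPartition} (h : InQk m n k ν μ) (hn : 0 < n) (i : ℕ) :
    n ≤ ν.parts i ↔ i < k :=
  h.2 ▸ ν.le_parts_iff_lt_conjP hn i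

theorem InQk.parts_eq_zero {ν μ : PPartition} (h : InQk m n k ν μ) {i : ℕ} (hi : m - k ≤ i) :
    μ.parts i = 0 :=
  (μ.lenP_le_iff _).1 h.1 i hi

theorem InQk.inPk_psi {ν μ : PPartition} (h : InQk m n k ν μ) (hn : 0 < n) (hk : k ≤ m) :
    InPk m n k (psiEven m n k ν μ) (psiOdd n ν) := by
  have hlong := h.le_parts_iff hn
  refine ⟨fun a b hab => ?_, fun a b hab => ?_, hk, fun j hj => ?_, fun i hi => ?_,
    fun i hi => ?_⟩
  · have hab : (a : ℕ) ≤ b := hab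
    have := b.isLt
    rcases lt_or_ge ((b : ℕ) + k) m with hb | hb
    · rw [psiEven_of_lt _ _ hb, psiEven_of_lt _ _ (by omega)]
      exact_mod_cast μ.antitone hab
    rw [psiEven_of_le _ _ hb]
    rcases lt_or_ge ((a : ℕ) + k) m with ha | ha
    · rw [psiEven_of_lt _ _ ha]
      have := (hlong (m - 1 - b)).2 (by omega)
      omega
    · rw [psiEven_of_le _ _ ha]
      have := ν.antitone (show m - 1 - (b : ℕ) ≤ m - 1 - a by omega)
      omega
  · have := ν.conjP_le_conjP (show 1 ≤ n - (b : ℕ) by omega)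
      (show n - (b : ℕ) ≤ n - a by omega)
    simp only [psiOdd]
    omega
  · simp [psiOdd, hj, h.2]
  · rw [psiEven_of_lt _ _ (by omega)]
    positivity
  · rw [psiEven_of_le _ _ (by omega)]
    have := (hlong (m - 1 - i)).2 (by omega)
    omega

theorem InQk.eq_of_psi_eq {ν₁ μ₁ ν₂ μ₂ : PPartition} (h₁ : InQk m n k ν₁ μ₁)
    (h₂ : InQk m n k ν₂ μ₂) (hn : 0 < n) (hk : k ≤ m)
    (hE : psiEven m n k ν₁ μ₁ = psiEven m n k ν₂ μ₂) (hO : psiOdd n ν₁ = psiOdd n ν₂) :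
    ν₁ = ν₂ ∧ μ₁ = μ₂ := by
  have hconj (t : ℕ) (ht : 1 ≤ t) (htn : t ≤ n) : conjP ν₁ t = conjP ν₂ t := by
    have := congrFun hO ⟨n - t, by omega⟩
    simp only [psiOdd, Nat.sub_sub_self htn] at this
    omega
  refine ⟨PPartition.ext (funext fun i => ?_), PPartition.ext (funext fun i => ?_)⟩
  · rcases lt_or_ge i k with hik | hik
    · have := congrFun hE ⟨m - 1 - i, by omega⟩
      rw [psiEven_of_le _ _ (by simp only; omega), psiEven_of_le _ _ (by simp only; omega)] at this
      simp only [show m - 1 - (m - 1 - i) = i by omega] at this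
      omega
    · have l₁ := parts_le_of_conjP_le (fun t h h' => (hconj t h h').le)
        (not_le.1 ((h₁.le_parts_iff hn i).not.2 (by omega))).le
      have l₂ := parts_le_of_conjP_le (fun t h h' => (hconj t h h').ge)
        (not_le.1 ((h₂.le_parts_iff hn i).not.2 (by omega))).le
      omega
  · rcases lt_or_ge (i + k) m with him | him
    · have := congrFun hE ⟨i, by omega⟩
      rwa [psiEven_of_lt _ _ him, psiEven_of_lt _ _ him, Nat.cast_inj] at this
    · rw [h₁.parts_eq_zero (by omega), h₂.parts_eq_zero (by omega)]

/-- The column length `ν′_t = -β_{n-t}` (for `1 ≤ t ≤ n`) prescribed by the odd part `β`. -/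
def colOf (β : Fin n → ℤ) (t : ℕ) : ℕ :=
  if h : 1 ≤ t ∧ t ≤ n then (-β ⟨n - t, by omega⟩).toNat else 0

def muPartsOf (k : ℕ) (α : Fin m → ℤ) (i : ℕ) : ℕ :=
  if h : i + k < m then (α ⟨i, by omega⟩).toNat else 0

def nuPartsOf (k : ℕ) (α : Fin m → ℤ) (β : Fin n → ℤ) (i : ℕ) : ℕ :=
  if h : i < k ∧ i < m then ((n : ℤ) - α ⟨m - 1 - i, by omega⟩).toNat
  else Nat.findGreatest (fun t => i < colOf β t) n

variable {α : Fin m → ℤ} {β : Fin n → ℤ}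

theorem InPk.nonneg (hw : InPk m n k α β) {i : Fin m} (hi : (i : ℕ) + k < m) : 0 ≤ α i :=
  (hw.2.2.2.2.1 ⟨m - k - 1, by omega⟩ (by simp only; omega)).trans
    (hw.1 (Fin.mk_le_mk.2 (by omega) : i ≤ ⟨m - k - 1, by omega⟩))

theorem InPk.nonpos (hw : InPk m n k α β) {i : Fin m} (hi : m ≤ (i : ℕ) + k) : α i ≤ 0 :=
  have := i.isLt
  have := hw.2.2.1
  (hw.1 (Fin.mk_le_mk.2 (by omega) : (⟨m - k, by omega⟩ : Fin m) ≤ i)).trans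
    (hw.2.2.2.2.2 ⟨m - k, by omega⟩ (by simp only; omega))

theorem InPk.le_neg (hw : InPk m n k α β) (j : Fin n) : β j ≤ -k :=
  have := j.isLt
  hw.2.2.2.1 ⟨0, by omega⟩ rfl ▸ hw.2.1 (Fin.mk_le_mk.2 (Nat.zero_le _) : ⟨0, by omega⟩ ≤ j)

theorem InPk.natCast_colOf (hw : InPk m n k α β) {t : ℕ} (ht : 1 ≤ t) (htn : t ≤ n) :
    (colOf β t : ℤ) = -β ⟨n - t, by omega⟩ := by
  have := hw.le_neg ⟨n - t, by omega⟩
  rw [colOf, dif_pos ⟨ht, htn⟩]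
  omega

theorem InPk.le_colOf (hw : InPk m n k α β) {t : ℕ} (ht : 1 ≤ t) (htn : t ≤ n) :
    k ≤ colOf β t := by
  have := hw.natCast_colOf ht htn
  have := hw.le_neg ⟨n - t, by omega⟩
  omega

theorem InPk.colOf_self (hw : InPk m n k α β) (hn : 0 < n) : colOf β n = k := by
  have := hw.natCast_colOf hn le_rfl
  have := hw.2.2.2.1 ⟨n - n, by omega⟩ (Nat.sub_self n)
  omega

theorem InPk.antitoneOn_colOf (hw : InPk m n k α β) : AntitoneOn (colOf β) (Set.Icc 1 n) := by
  rintro a ⟨ha, han⟩ b ⟨hb, hbn⟩ hab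
  have := hw.2.1 (Fin.mk_le_mk.2 (by omega) :
    (⟨n - b, by omega⟩ : Fin n) ≤ ⟨n - a, by omega⟩)
  have := hw.natCast_colOf ha han
  have := hw.natCast_colOf hb hbn
  omega

theorem InPk.le_nuPartsOf (hw : InPk m n k α β) {i : ℕ} (hi : i < k) :
    n ≤ nuPartsOf k α β i := by
  have hkm := hw.2.2.1
  have := hw.nonpos (i := ⟨m - 1 - i, by omega⟩) (by simp only; omega)
  rw [nuPartsOf, dif_pos ⟨hi, by omega⟩]
  omega

theorem InPk.natCast_nuPartsOf_rev (hw : InPk m n k α β) {i : Fin m} (hi : m ≤ (i : ℕ) + k) :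
    (nuPartsOf k α β (m - 1 - i) : ℤ) = n - α i := by
  have := hw.nonpos hi
  have hrev : (⟨m - 1 - (m - 1 - i), by omega⟩ : Fin m) = i := Fin.ext (by simp only; omega)
  rw [nuPartsOf, dif_pos ⟨by omega, by omega⟩, hrev]
  omega

theorem nuPartsOf_le {i : ℕ} (hi : k ≤ i) : nuPartsOf k α β i ≤ n := by
  rw [nuPartsOf, dif_neg (by omega)]
  exact Nat.findGreatest_le n

theorem InPk.le_nuPartsOf_iff (hw : InPk m n k α β) {t : ℕ} (ht : 1 ≤ t) (htn : t ≤ n)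
    (i : ℕ) : t ≤ nuPartsOf k α β i ↔ i < colOf β t := by
  rcases lt_or_ge i k with hi | hi
  · exact iff_of_true (htn.trans (hw.le_nuPartsOf hi)) (hi.trans_le (hw.le_colOf ht htn))
  · rw [nuPartsOf, dif_neg (by omega)]
    exact le_findGreatest_lt_iff hw.antitoneOn_colOf ht htn i

theorem InPk.antitone_nuPartsOf (hw : InPk m n k α β) : Antitone (nuPartsOf k α β) := by
  intro a b hab
  rcases lt_or_ge b k with hb | hb
  · have hkm := hw.2.2.1
    rw [nuPartsOf, nuPartsOf, dif_pos ⟨hb, by omega⟩, dif_pos ⟨by omega, by omega⟩]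
    have := hw.1 (Fin.mk_le_mk.2 (by omega) :
      (⟨m - 1 - b, by omega⟩ : Fin m) ≤ ⟨m - 1 - a, by omega⟩)
    omega
  rcases lt_or_ge a k with ha | ha
  · exact (nuPartsOf_le hb).trans (hw.le_nuPartsOf ha)
  · rw [nuPartsOf, nuPartsOf, dif_neg (by omega), dif_neg (by omega)]
    exact Nat.findGreatest_mono_left (fun t h => by omega) n

theorem InPk.nuPartsOf_eventually_zero (hw : InPk m n k α β) :
    ∃ N, ∀ i, N ≤ i → nuPartsOf k α β i = 0 := by
  refine ⟨k + colOf β 1, fun i hi => ?_⟩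
  rw [nuPartsOf, dif_neg (by omega), Nat.findGreatest_eq_zero_iff]
  intro t ht htn h
  have := hw.antitoneOn_colOf ⟨le_rfl, by omega⟩ ⟨ht, htn⟩ ht
  omega

theorem muPartsOf_eq_zero {i : ℕ} (hi : m ≤ i + k) : muPartsOf k α i = 0 :=
  dif_neg (by omega)

theorem InPk.natCast_muPartsOf (hw : InPk m n k α β) {i : Fin m} (hi : (i : ℕ) + k < m) :
    (muPartsOf k α i : ℤ) = α i := by
  have := hw.nonneg hi
  rw [muPartsOf, dif_pos hi, Fin.eta]
  omega

theorem InPk.antitone_muPartsOf (hw : InPk m n k α β) : Antitone (muPartsOf k α) := by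
  intro a b hab
  rcases lt_or_ge (b + k) m with hb | hb
  · rw [muPartsOf, muPartsOf, dif_pos hb, dif_pos (by omega)]
    have := hw.1 (Fin.mk_le_mk.2 hab : (⟨a, by omega⟩ : Fin m) ≤ ⟨b, by omega⟩)
    omega
  · rw [muPartsOf_eq_zero hb]
    exact Nat.zero_le _

theorem InPk.exists_inQk_psi_eq (hw : InPk m n k α β) (hn : 0 < n) :
    ∃ ν μ : PPartition, InQk m n k ν μ ∧ psiEven m n k ν μ = α ∧ psiOdd n ν = β := by
  let ν : PPartition := ⟨nuPartsOf k α β, hw.antitone_nuPartsOf, hw.nuPartsOf_eventually_zero⟩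
  let μ : PPartition :=
    ⟨muPartsOf k α, hw.antitone_muPartsOf, ⟨m, fun i hi => muPartsOf_eq_zero (by omega)⟩⟩
  have hconj {t : ℕ} (ht : 1 ≤ t) (htn : t ≤ n) : conjP ν t = colOf β t :=
    conjP_eq_of_forall_iff (hw.le_nuPartsOf_iff ht htn)
  refine ⟨ν, μ, ⟨(μ.lenP_le_iff _).2 fun i hi => muPartsOf_eq_zero (by omega), ?_⟩,
    funext fun i => ?_, funext fun j => ?_⟩
  · rw [hconj hn le_rfl, hw.colOf_self hn]
  · rcases lt_or_ge ((i : ℕ) + k) m with hi | hi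
    · rw [psiEven_of_lt _ _ hi]
      exact hw.natCast_muPartsOf hi
    · rw [psiEven_of_le _ _ hi]
      have := hw.natCast_nuPartsOf_rev hi
      simp only [ν]
      omega
  · have := j.isLt
    simp only [psiOdd]
    rw [hconj (by omega) (by omega), hw.natCast_colOf (by omega) (by omega), neg_neg]
    exact congrArg β (Fin.ext (by simp only; omega))

end Psi

theorem psi_bijOn_general (m n k : ℕ) (hn : 0 < n) (hk : k ≤ m) :
    Set.BijOn
      (fun p : PPartition × PPartition =>
        ((psiEven m n k p.1 p.2, psiOdd n p.1) : (Fin m → ℤ) × (Fin n → ℤ)))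
      {p : PPartition × PPartition | InQk m n k p.1 p.2}
      {w : (Fin m → ℤ) × (Fin n → ℤ) | InPk m n k w.1 w.2} := by
  refine ⟨fun p hp => InQk.inPk_psi hp hn hk, fun p hp q hq hpq => ?_, fun w hw => ?_⟩
  · obtain ⟨hν, hμ⟩ := InQk.eq_of_psi_eq hp hq hn hk (congrArg Prod.fst hpq) (congrArg Prod.snd hpq)
    exact Prod.ext hν hμ
  · obtain ⟨ν, μ, h, hE, hO⟩ := InPk.exists_inQk_psi_eq hw hn
    exact ⟨(ν, μ), h, Prod.ext hE hO⟩

/-- The map `ψ_k : Q_k(m,n) → P_k` is a bijection between `Q_k(m,n)`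
and `P_k`. -/
theorem psi_bijOn (m n k : ℕ) (hm : 0 < m) (hn : 0 < n) (hk : k ≤ m) :
    Set.BijOn
      (fun p : PPartition × PPartition =>
        ((psiEven m n k p.1 p.2, psiOdd n p.1) : (Fin m → ℤ) × (Fin n → ℤ)))
      {p : PPartition × PPartition | InQk m n k p.1 p.2}
      {w : (Fin m → ℤ) × (Fin n → ℤ) | InPk m n k w.1 w.2} :=
  psi_bijOn_general m n k hn hk
end

section
/- Let m, n ≥ 1, 0 ≤ k ≤ m, let ν̄;μ ∈ Q_k(m,n), let Λ = ψ_k(ν̄;μ) = (μ_1, …, μ_{m−k}, n − ν_k, …, n − ν_1; −ν′_n, …, −ν′_1), and let Λ′ = (μ_1, …, μ_{m−k}; −(ν′_n − k), …, −(ν′_1 − k)) regarded as a weight for gl(m−k|n). Then for every pair (i, j) with 1 ≤ i ≤ m and 1 ≤ j ≤ n: (i, j) is an atypical root of Λ (for the parameters (m, n)) if and only if i ≤ m − k and (i, j) is an atypical root of Λ′ (for the parameters (m−k, n)). In particular Γ(m|n)(Λ) = Γ(m−k|n)(Λ′). -/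
/-- `(i, j)` (0-based) is an atypical root of the weight `(α; β)` for `gl(p|q)`:
in 1-based indices, `α_i + p + 1 − i = −β_j + j`. -/
def AtypRoot (p q : ℕ) (α : Fin p → ℤ) (β : Fin q → ℤ) (i : Fin p) (j : Fin q) : Prop :=
  α i + (p : ℤ) + 1 - (((i : ℕ) : ℤ) + 1) = -(β j) + (((j : ℕ) : ℤ) + 1)

lemma PPartition.finite_setOf_le_parts (ν : PPartition) {j : ℕ} (hj : 1 ≤ j) :
    {i : ℕ | j ≤ ν.parts i}.Finite := by
  obtain ⟨N, hN⟩ := ν.eventually_zero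
  refine (Set.finite_Iio N).subset fun i hi => ?_
  by_contra hiN
  have := hN i (not_lt.mp hiN)
  simp_all [Set.mem_ofPred_eq]

lemma conjP_le_conjP (ν : PPartition) {a b : ℕ} (ha : 1 ≤ a) (hab : a ≤ b) :
    conjP ν b ≤ conjP ν a :=
  Set.ncard_le_ncard (fun _ hi => le_trans hab hi) (ν.finite_setOf_le_parts ha)

lemma le_parts_of_lt_conjP (ν : PPartition) {j t : ℕ} (ht : t < conjP ν j) :
    j ≤ ν.parts t := by
  by_contra! hlt
  have hsub : {i : ℕ | j ≤ ν.parts i} ⊆ Set.Iio t := fun i hi => by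
    by_contra! hti
    exact absurd (le_trans hi (ν.antitone (not_lt.mp hti))) (not_le.mpr hlt)
  have := Set.ncard_le_ncard hsub (Set.finite_Iio t)
  rw [← Finset.coe_Iio, Set.ncard_coe_finset, Nat.card_Iio] at this
  exact absurd ht (not_lt.mpr this)

section psi

variable {m n k : ℕ} {ν μ : PPartition} {i : Fin m} {j : Fin n}

lemma atypRoot_psi_iff_of_lt (hik : (i : ℕ) + k < m) :
    AtypRoot m n (psiEven m n k ν μ) (psiOdd n ν) i j ↔
      AtypRoot (m - k) n (fun i' => (μ.parts (i' : ℕ) : ℤ))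
        (fun j' => -((conjP ν (n - (j' : ℕ)) : ℤ) - (k : ℤ)))
        ⟨i, Nat.lt_sub_of_add_lt hik⟩ j := by
  simp only [AtypRoot, psiEven, psiOdd, if_pos hik]
  push_cast [Nat.cast_sub (show k ≤ m by omega)]
  constructor <;> intro H <;> linarith

/-- The last `k` even entries `n − ν_t` are `≤ 0` because `ν_t ≥ n` for `t ≤ ν′_n = k`, so
their side of the atypicality equation is at most `k`; the odd side is at least
`ν′_n + 1 = k + 1` since `ν′` is antitone. -/
lemma not_atypRoot_psi_of_le (hν : conjP ν n = k) (hik : m ≤ (i : ℕ) + k) :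
    ¬ AtypRoot m n (psiEven m n k ν μ) (psiOdd n ν) i j := by
  have hi := i.isLt
  have hj := j.isLt
  have hparts : n ≤ ν.parts (m - 1 - i) := le_parts_of_lt_conjP ν (by omega)
  have hconj : k ≤ conjP ν (n - j) := hν ▸ conjP_le_conjP ν (by omega) (by omega)
  simp only [AtypRoot, psiEven, psiOdd, if_neg (not_lt.mpr hik)]
  omega

end psi

/-- For `ν̄;μ ∈ Q_k(m,n)`, `Λ = ψ_k(ν̄;μ)` and
`Λ′ = (μ_1, …, μ_{m−k}; −(ν′_n−k), …, −(ν′_1−k))` (a `gl(m−k|n)` weight), a pair `(i, j)`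
is an atypical root of `Λ` iff `i ≤ m−k` and `(i, j)` is an atypical root of `Λ′`.
In particular `Γ(m|n)(Λ) = Γ(m−k|n)(Λ′)`. -/
theorem atypical_iff (m n k : ℕ)
    (ν μ : PPartition) (h : InQk m n k ν μ) :
    ∀ (i : Fin m) (j : Fin n),
      AtypRoot m n (psiEven m n k ν μ) (psiOdd n ν) i j ↔
      ∃ hik : (i : ℕ) + k < m,
        AtypRoot (m - k) n (fun i' => (μ.parts (i' : ℕ) : ℤ))
          (fun j' => -((conjP ν (n - (j' : ℕ)) : ℤ) - (k : ℤ)))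
          ⟨(i : ℕ), by omega⟩ j := by
  intro i j
  by_cases hik : (i : ℕ) + k < m
  · exact (atypRoot_psi_iff_of_lt hik).trans ⟨fun H => ⟨hik, H⟩, fun ⟨_, H⟩ => H⟩
  · exact iff_of_false (not_atypRoot_psi_of_le h.2 (not_lt.mp hik)) fun ⟨hik', _⟩ => hik hik'
end

section
/- Let K be a field, let x_1, …, x_m and y_1, …, y_n (n ≥ 1) be nonzero elements of K, and let ν̄;μ be a composite partition. Then s_{ν̄;μ}(x/y) = Σ_{α, β} s_{β̄;α}(x/y^{(n−1)}) · y_n^{a−b}, where y^{(n−1)} = (y_1, …, y_{n−1}), the sum is over all pairs of partitions α, β with 0 ≤ μ_i − α_i ≤ 1 for all i and 0 ≤ ν_i − β_i ≤ 1 for all i, a = Σ_i (μ_i − α_i), b = Σ_i (ν_i − β_i), and each s_{β̄;α}(x/y^{(n−1)}) is computed by the same determinant with β and α padded with zero parts to l(ν) and l(μ) parts respectively. -/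
/-!
Adjoining the variable `y_n` turns `h_r(x/y)` into `h_r + y_n h_{r-1}` and `ḣ_r(x/y)` into
`ḣ_r + y_n⁻¹ ḣ_{r-1}` over `y^{(n-1)}`. Hence every column of the determinant splits as its
counterpart over `y^{(n-1)}` plus `y_n^{±1}` times the column of the part lowered by one, and
multilinear expansion over the set of columns taking the second summand yields one term per
pair `(α, β)`. When `α` or `β` fails to be a partition, two adjacent columns coincide and the
term vanishes.
-/

open Finset

variable {K : Type*} [Field K] {ι : Type*} [DecidableEq ι] {ι' : Type*} [DecidableEq ι']

/-- The complete homogeneous symmetric polynomial `h_r` evaluated at the variables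
`x_i`, `i ∈ s`. -/
def hh (s : Finset ι) (x : ι → K) (r : ℕ) : K :=
  ∑ t ∈ s.sym r, (Multiset.map x (t : Multiset ι)).prod

/-- The elementary symmetric polynomial `e_r` evaluated at the variables `y_j`, `j ∈ s`
(it vanishes when `r` exceeds the number of variables). -/
def ee (s : Finset ι) (x : ι → K) (r : ℕ) : K :=
  ∑ t ∈ s.powersetCard r, ∏ i ∈ t, x i

/-- The complete supersymmetric function `h_r(x/y) = Σ_{k=0}^{r} h_k(x) e_{r−k}(y)` for
`r ≥ 0`, and `h_r(x/y) = 0` for `r < 0`. -/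
def hsupZ (sx : Finset ι) (x : ι → K) (sy : Finset ι') (y : ι' → K) (r : ℤ) : K :=
  if 0 ≤ r then ∑ k ∈ Finset.range (r.toNat + 1), hh sx x k * ee sy y (r.toNat - k) else 0

/-- `ḣ_r(x/y) = h_r(x̄/ȳ)`, evaluated at the inverted variables. -/
def hdotZ (sx : Finset ι) (x : ι → K) (sy : Finset ι') (y : ι' → K) (r : ℤ) : K :=
  hsupZ sx (fun i => (x i)⁻¹) sy (fun j => (y j)⁻¹) r

/-- The supersymmetric S-function `s_{ν̄;μ}(x/y)` of a composite partition `ν̄;μ`, given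
as the `(a+b) × (a+b)` determinant with `a = l(ν)`, `b = l(μ)` (0-based partition
functions `nu`, `mu`): in 1-based indices, the entry in row `s = a, …, 1` / `i = 1, …, b`
and column `t = a, …, 1` / `j = 1, …, b` is `ḣ_{ν_t+s−t}(x/y)`, `h_{μ_j−s−j+1}(x/y)`,
`ḣ_{ν_t−i−t+1}(x/y)`, `h_{μ_j+i−j}(x/y)` respectively; all four prescriptions collapse to
the single formula below in terms of the 0-based row index `u` and column index `v`. -/
def superS (sx : Finset ι) (x : ι → K) (sy : Finset ι') (y : ι' → K)
    (a b : ℕ) (nu mu : ℕ → ℕ) : K :=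
  Matrix.det (Matrix.of fun u v : Fin (a + b) =>
    if (v : ℕ) < a then
      hdotZ sx x sy y ((nu (a - 1 - (v : ℕ)) : ℤ) + ((v : ℕ) : ℤ) - ((u : ℕ) : ℤ))
    else
      hsupZ sx x sy y ((mu ((v : ℕ) - a) : ℤ) + ((u : ℕ) : ℤ) - ((v : ℕ) : ℤ)))

theorem Multiset.esymm_cons_succ {R : Type*} [CommSemiring R] (a : R) (s : Multiset R) (n : ℕ) :
    (a ::ₘ s).esymm (n + 1) = s.esymm (n + 1) + a * s.esymm n := by
  simp only [Multiset.esymm, Multiset.powersetCard_cons, Multiset.map_add, Multiset.sum_add,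
    Multiset.map_map, Function.comp_def, Multiset.prod_cons, Multiset.sum_map_mul_left]

omit [DecidableEq ι] in
theorem ee_zero (s : Finset ι) (x : ι → K) : ee s x 0 = 1 := by
  simp [ee]

theorem ee_insert {a : ι} {s : Finset ι} (ha : a ∉ s) (x : ι → K) (r : ℕ) :
    ee (insert a s) x (r + 1) = ee s x (r + 1) + x a * ee s x r := by
  simp only [ee, ← Finset.esymm_map_val, Finset.insert_val_of_notMem ha, Multiset.map_cons,
    Multiset.esymm_cons_succ]

omit [DecidableEq ι'] in
theorem hsupZ_natCast_eq_sum_antidiagonal (sx : Finset ι) (x : ι → K) (sy : Finset ι')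
    (y : ι' → K) (r : ℕ) :
    hsupZ sx x sy y r = ∑ p ∈ antidiagonal r, hh sx x p.1 * ee sy y p.2 := by
  simp [hsupZ, Finset.Nat.sum_antidiagonal_eq_sum_range_succ_mk]

omit [DecidableEq ι'] in
theorem hsupZ_of_neg (sx : Finset ι) (x : ι → K) (sy : Finset ι') (y : ι' → K) {r : ℤ}
    (hr : r < 0) : hsupZ sx x sy y r = 0 :=
  if_neg hr.not_ge

theorem hsupZ_insert (sx : Finset ι) (x : ι → K) {c : ι'} {sy : Finset ι'} (hc : c ∉ sy)
    (y : ι' → K) (r : ℤ) :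
    hsupZ sx x (insert c sy) y r = hsupZ sx x sy y r + y c * hsupZ sx x sy y (r - 1) := by
  obtain (_ | r) | r := r
  · simp [hsupZ, ee_zero]
  · rw [show Int.ofNat (r + 1) - 1 = r by simp]
    simp only [Int.ofNat_eq_natCast, hsupZ_natCast_eq_sum_antidiagonal,
      Finset.Nat.sum_antidiagonal_succ', ee_insert hc, mul_add, Finset.sum_add_distrib,
      Finset.mul_sum, mul_left_comm (y c), ee_zero, add_assoc]
  · simp [hsupZ_of_neg, Int.negSucc_lt_zero]

theorem hdotZ_insert (sx : Finset ι) (x : ι → K) {c : ι'} {sy : Finset ι'} (hc : c ∉ sy)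
    (y : ι' → K) (r : ℤ) :
    hdotZ sx x (insert c sy) y r = hdotZ sx x sy y r + (y c)⁻¹ * hdotZ sx x sy y (r - 1) :=
  hsupZ_insert sx _ hc _ r

namespace Matrix

theorem det_add_mul_diagonal {n R : Type*} [Fintype n] [DecidableEq n] [CommRing R]
    (M N : Matrix n n R) (c : n → R) :
    (M + N * diagonal c).det =
      ∑ S : Finset n, (∏ j ∈ S, c j) * (of fun i j => if j ∈ S then N i j else M i j).det := by
  have hcols : ((M + N * diagonal c)ᵀ : n → n → R) = (fun j => c j • Nᵀ j) + fun j => Mᵀ j := by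
    ext j i
    simp [mul_comm, add_comm]
  rw [← det_transpose]
  change detRowAlternating.toMultilinearMap (M + N * diagonal c)ᵀ = _
  rw [hcols, MultilinearMap.map_add_univ]
  refine Finset.sum_congr rfl fun S _ => ?_
  have hpiece : S.piecewise (fun j => c j • Nᵀ j) (fun j => Mᵀ j) =
      S.piecewise (fun j => c j • S.piecewise (fun j => Nᵀ j) (fun j => Mᵀ j) j)
        (S.piecewise (fun j => Nᵀ j) (fun j => Mᵀ j)) := by
    ext j i
    by_cases hj : j ∈ S <;> simp [hj]
  rw [hpiece, MultilinearMap.map_piecewise_smul, smul_eq_mul, ← det_transpose (of _)]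
  congr 1
  show det _ = det _
  congr 1
  ext j i
  by_cases hj : j ∈ S <;> simp [hj]

end Matrix

def superMatrix (sx : Finset ι) (x : ι → K) (sy : Finset ι') (y : ι' → K)
    (a b : ℕ) (nu mu : ℕ → ℕ) : Matrix (Fin (a + b)) (Fin (a + b)) K :=
  Matrix.of fun u v : Fin (a + b) =>
    if (v : ℕ) < a then
      hdotZ sx x sy y ((nu (a - 1 - (v : ℕ)) : ℤ) + ((v : ℕ) : ℤ) - ((u : ℕ) : ℤ))
    else
      hsupZ sx x sy y ((mu ((v : ℕ) - a) : ℤ) + ((u : ℕ) : ℤ) - ((v : ℕ) : ℤ))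

omit [DecidableEq ι'] in
theorem superS_eq_det (sx : Finset ι) (x : ι → K) (sy : Finset ι') (y : ι' → K)
    (a b : ℕ) (nu mu : ℕ → ℕ) :
    superS sx x sy y a b nu mu = (superMatrix sx x sy y a b nu mu).det :=
  rfl

theorem superMatrix_insert (sx : Finset ι) (x : ι → K) {c : ι'} {sy : Finset ι'} (hc : c ∉ sy)
    (y : ι' → K) {a b : ℕ} {nu mu : ℕ → ℕ} (hnu : ∀ i < a, 0 < nu i) (hmu : ∀ j < b, 0 < mu j) :
    superMatrix sx x (insert c sy) y a b nu mu =
      superMatrix sx x sy y a b nu mu +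
        superMatrix sx x sy y a b (nu · - 1) (mu · - 1) *
          Matrix.diagonal fun v : Fin (a + b) => if (v : ℕ) < a then (y c)⁻¹ else y c := by
  ext u v
  simp only [superMatrix, Matrix.add_apply, Matrix.mul_diagonal, Matrix.of_apply]
  split_ifs with hv
  · rw [hdotZ_insert sx x hc, mul_comm, Nat.cast_sub (hnu _ (by omega))]
    ring_nf
  · rw [hsupZ_insert sx x hc, mul_comm, Nat.cast_sub (hmu _ (by omega))]
    ring_nf

/-- Column `v < a` carries the part `ν_{a-1-v}`, column `a + j` the part `μ_j`. -/
def columnSet (a b : ℕ) (A B : Finset ℕ) : Finset (Fin (a + b)) :=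
  univ.filter fun v => if (v : ℕ) < a then a - 1 - v ∈ B else v - a ∈ A

omit [DecidableEq ι'] in
theorem superMatrix_piecewise_columnSet (sx : Finset ι) (x : ι → K) (sy : Finset ι') (y : ι' → K)
    (a b : ℕ) (nu mu : ℕ → ℕ) (A B : Finset ℕ) :
    Matrix.of (fun u v => if v ∈ columnSet a b A B
        then superMatrix sx x sy y a b (nu · - 1) (mu · - 1) u v
        else superMatrix sx x sy y a b nu mu u v) =
      superMatrix sx x sy y a b (fun i => nu i - if i ∈ B then 1 else 0)
        (fun i => mu i - if i ∈ A then 1 else 0) := by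
  ext u v
  simp only [columnSet, superMatrix, Finset.mem_filter, Finset.mem_univ, true_and,
    Matrix.of_apply]
  split_ifs <;> rfl

def muIndices {N : ℕ} (a : ℕ) (S : Finset (Fin N)) : Finset ℕ :=
  (S.filter fun v : Fin N => ¬ (v : ℕ) < a).image fun v : Fin N => (v : ℕ) - a

def nuIndices {N : ℕ} (a : ℕ) (S : Finset (Fin N)) : Finset ℕ :=
  (S.filter fun v : Fin N => (v : ℕ) < a).image fun v : Fin N => a - 1 - (v : ℕ)

theorem card_muIndices {N : ℕ} (a : ℕ) (S : Finset (Fin N)) :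
    #(muIndices a S) = #(S.filter fun v : Fin N => ¬ (v : ℕ) < a) :=
  card_image_of_injOn fun v hv w hw h => by
    simp only [coe_filter, Set.mem_ofPred_eq] at hv hw
    exact Fin.ext (by omega)

theorem card_nuIndices {N : ℕ} (a : ℕ) (S : Finset (Fin N)) :
    #(nuIndices a S) = #(S.filter fun v : Fin N => (v : ℕ) < a) :=
  card_image_of_injOn fun v hv w hw h => by
    simp only [coe_filter, Set.mem_ofPred_eq] at hv hw
    exact Fin.ext (by omega)

theorem columnSet_muIndices_nuIndices {a b : ℕ} (S : Finset (Fin (a + b))) :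
    columnSet a b (muIndices a S) (nuIndices a S) = S := by
  ext v
  simp only [columnSet, muIndices, nuIndices, mem_filter, mem_univ, true_and, mem_image]
  split_ifs with hv
  · refine ⟨fun ⟨w, ⟨hw, hwa⟩, hwv⟩ => ?_, fun hvS => ⟨v, ⟨hvS, hv⟩, rfl⟩⟩
    rwa [← Fin.ext (by omega : (w : ℕ) = v)]
  · refine ⟨fun ⟨w, ⟨hw, hwa⟩, hwv⟩ => ?_, fun hvS => ⟨v, ⟨hvS, hv⟩, rfl⟩⟩
    rwa [← Fin.ext (by omega : (w : ℕ) = v)]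

theorem muIndices_columnSet {a b : ℕ} {A : Finset ℕ} (hA : A ⊆ range b) (B : Finset ℕ) :
    muIndices a (columnSet a b A B) = A := by
  ext j
  simp only [columnSet, muIndices, mem_filter, mem_univ, true_and, mem_image]
  constructor
  · rintro ⟨v, ⟨hvA, hv⟩, rfl⟩
    simpa [hv] using hvA
  · intro hj
    have hjb := mem_range.1 (hA hj)
    exact ⟨⟨a + j, by omega⟩, by simpa using hj, by simp⟩

theorem nuIndices_columnSet {a b : ℕ} (A : Finset ℕ) {B : Finset ℕ} (hB : B ⊆ range a) :
    nuIndices a (columnSet a b A B) = B := by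
  ext i
  simp only [columnSet, nuIndices, mem_filter, mem_univ, true_and, mem_image]
  constructor
  · rintro ⟨v, ⟨hvB, hv⟩, rfl⟩
    simpa [hv] using hvB
  · intro hi
    have hia := mem_range.1 (hB hi)
    refine ⟨⟨a - 1 - i, by omega⟩, ?_, by simp; omega⟩
    simp only [show a - 1 - i < a by omega, if_true, and_true]
    rwa [show a - 1 - (a - 1 - i) = i by omega]

theorem sum_eq_sum_columnSet {M : Type*} [AddCommMonoid M] (a b : ℕ)
    (f : Finset (Fin (a + b)) → M) :
    ∑ S, f S = ∑ A ∈ (range b).powerset, ∑ B ∈ (range a).powerset, f (columnSet a b A B) := by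
  rw [← sum_product']
  refine sum_nbij' (fun S => (muIndices a S, nuIndices a S)) (fun p => columnSet a b p.1 p.2)
    (fun S _ => ?_) (fun _ _ => mem_univ _) (fun S _ => columnSet_muIndices_nuIndices S)
    (fun p hp => ?_) (fun S _ => by rw [columnSet_muIndices_nuIndices])
  · simp only [mem_product, mem_powerset, subset_iff, muIndices, nuIndices, mem_image,
      mem_filter, mem_range]
    constructor <;> rintro _ ⟨v, ⟨_, hv⟩, rfl⟩ <;> omega
  · obtain ⟨hA, hB⟩ := mem_product.1 hp
    exact Prod.ext (muIndices_columnSet (mem_powerset.1 hA) p.2)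
      (nuIndices_columnSet p.1 (mem_powerset.1 hB))

theorem prod_columnSet {a b : ℕ} {A B : Finset ℕ} (hA : A ⊆ range b) (hB : B ⊆ range a)
    {z : K} (hz : z ≠ 0) :
    ∏ v ∈ columnSet a b A B, (if (v : ℕ) < a then z⁻¹ else z) = z ^ ((#A : ℤ) - #B) := by
  rw [prod_ite, prod_const, prod_const, ← card_nuIndices, ← card_muIndices,
    nuIndices_columnSet A hB, muIndices_columnSet hA B, zpow_sub₀ hz, inv_pow]
  simp [div_eq_mul_inv, mul_comm]

omit [DecidableEq ι'] in
theorem superS_eq_zero_of_mu_succ (sx : Finset ι) (x : ι → K) (sy : Finset ι') (y : ι' → K)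
    {a b : ℕ} (nu : ℕ → ℕ) {mu : ℕ → ℕ} {i : ℕ} (hi : i + 1 < b)
    (h : mu (i + 1) = mu i + 1) :
    superS sx x sy y a b nu mu = 0 := by
  refine Matrix.det_zero_of_column_eq (i := ⟨a + i, by omega⟩) (j := ⟨a + i + 1, by omega⟩)
    (by simp) fun u => ?_
  simp only [Matrix.of_apply, show ¬ a + i < a by omega, show ¬ a + i + 1 < a by omega,
    if_false, Nat.add_sub_cancel_left, show a + i + 1 - a = i + 1 by omega, h]
  push_cast
  ring_nf

omit [DecidableEq ι'] in
theorem superS_eq_zero_of_nu_succ (sx : Finset ι) (x : ι → K) (sy : Finset ι') (y : ι' → K)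
    {a b : ℕ} {nu : ℕ → ℕ} (mu : ℕ → ℕ) {i : ℕ} (hi : i + 1 < a)
    (h : nu (i + 1) = nu i + 1) :
    superS sx x sy y a b nu mu = 0 := by
  refine Matrix.det_zero_of_column_eq (i := ⟨a - 1 - (i + 1), by omega⟩)
    (j := ⟨a - 1 - i, by omega⟩) (by simp; omega) fun u => ?_
  simp only [Matrix.of_apply, show a - 1 - (i + 1) < a by omega, show a - 1 - i < a by omega,
    if_true, show a - 1 - (a - 1 - (i + 1)) = i + 1 by omega,
    show a - 1 - (a - 1 - i) = i by omega, h]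
  congr 1
  push_cast [show i + 1 ≤ a - 1 by omega, show i ≤ a - 1 by omega]
  ring

theorem exists_succ_eq_of_not_antitone_sub_indicator {f : ℕ → ℕ} (hf : Antitone f) {l : ℕ}
    (hl : ∀ i, 0 < f i → i < l) {A : Finset ℕ}
    (h : ¬ Antitone fun i => f i - if i ∈ A then 1 else 0) :
    ∃ i, i + 1 < l ∧
      (f (i + 1) - if i + 1 ∈ A then 1 else 0) = (f i - if i ∈ A then 1 else 0) + 1 := by
  obtain ⟨i, hi⟩ :
      ∃ i, (f i - if i ∈ A then 1 else 0) < f (i + 1) - if i + 1 ∈ A then 1 else 0 := by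
    by_contra! hle
    exact h (antitone_nat_of_succ_le hle)
  have hfi : f (i + 1) ≤ f i := hf (Nat.le_succ i)
  refine ⟨i, hl _ ?_, ?_⟩ <;> split_ifs at hi ⊢ <;> omega

open scoped Classical

/-- The pair `(α, β)` is `(μ - 𝟙_A, ν - 𝟙_B)`. -/
theorem superS_isolate_last_variable (m n : ℕ) (hn : 0 < n)
    (x : Fin m → K) (y : Fin n → K) (hy0 : ∀ j, y j ≠ 0)
    (ν μ : ℕ → ℕ) (hν : Antitone ν) (hμ : Antitone μ) (lν lμ : ℕ)
    (hνlen : ∀ i, 0 < ν i ↔ i < lν) (hμlen : ∀ i, 0 < μ i ↔ i < lμ) :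
    superS Finset.univ x Finset.univ y lν lμ ν μ =
      ∑ A ∈ (Finset.range lμ).powerset, ∑ B ∈ (Finset.range lν).powerset,
        if Antitone (fun i => μ i - (if i ∈ A then 1 else 0)) ∧
            Antitone (fun i => ν i - (if i ∈ B then 1 else 0)) then
          superS Finset.univ x (Finset.univ.filter fun j : Fin n => (j : ℕ) + 1 < n) y
              lν lμ (fun i => ν i - (if i ∈ B then 1 else 0))
              (fun i => μ i - (if i ∈ A then 1 else 0)) *
            y ⟨n - 1, by omega⟩ ^ ((A.card : ℤ) - (B.card : ℤ))
        else 0 := by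
  set last : Fin n := ⟨n - 1, by omega⟩
  set sy := Finset.univ.filter fun j : Fin n => (j : ℕ) + 1 < n
  have hlast : last ∉ sy := by simp [sy, last]; omega
  have huniv : Finset.univ = insert last sy := by
    ext j
    simp only [mem_univ, mem_insert, mem_filter, true_and, true_iff, sy, last, Fin.ext_iff]
    omega
  rw [superS_eq_det, huniv, superMatrix_insert _ _ hlast _ (fun i => (hνlen i).2)
    (fun j => (hμlen j).2), Matrix.det_add_mul_diagonal, sum_eq_sum_columnSet]
  refine sum_congr rfl fun A hA => sum_congr rfl fun B hB => ?_
  rw [superMatrix_piecewise_columnSet, ← superS_eq_det,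
    prod_columnSet (mem_powerset.1 hA) (mem_powerset.1 hB) (hy0 last), mul_comm]
  split_ifs with hanti
  · rfl
  rcases not_and_or.1 hanti with hμA | hνB
  · obtain ⟨i, hi, heq⟩ :=
      exists_succ_eq_of_not_antitone_sub_indicator hμ (fun i => (hμlen i).1) hμA
    rw [superS_eq_zero_of_mu_succ _ _ _ _ _ hi heq, zero_mul]
  · obtain ⟨i, hi, heq⟩ :=
      exists_succ_eq_of_not_antitone_sub_indicator hν (fun i => (hνlen i).1) hνB
    rw [superS_eq_zero_of_nu_succ _ _ _ _ _ hi heq, zero_mul]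
end
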